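/- Let N ≥ 1, X a real normed space, C ⊆ X a convex subset, T_1,…,T_N : C → C nonexpansive mappings extended cyclically by T_n := T_{((n−1) mod N)+1}, (λ_n)_{n≥1} a sequence in [0,1], u ∈ C, and let (x_n) be the cyclic Halpern iteration: x_0 = u, x_{n+1} = λ_{n+1}·u + (1 − λ_{n+1})·T_{n+1}x_n. Let M > 0 with ‖u − T_i u‖ ≤ M for each i = 1,…,N and ‖x_n − u‖ ≤ M for all n ∈ ℕ. Then for all n ≥ 1, ‖x_n − x_{n+N}‖ ≤ (1 − λ_n)·‖x_{n−1} − x_{n+N−1}‖ + 2M·|λ_{n+N} − λ_n|. -/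

import Mathlib

/-!
Writing `S = T (n+1) = T (n+N+1)` (the maps are `N`-periodic), the difference of two consecutive
Halpern steps `N` apart splits as
`(λ - λ') • (u - S x') + (1 - λ) • (S x - S x')`;
the first term is at most `2M |λ - λ'|` since `‖u - S x'‖ ≤ ‖u - S u‖ + ‖u - x'‖`, and the second
at most `(1 - λ) ‖x - x'‖` by nonexpansiveness.
-/

section Cyclic

variable {α : Type*} {N : ℕ} {T : ℕ → α}

lemma exists_eq_of_cyclic (hN : 1 ≤ N) (hcyc : ∀ n, 1 ≤ n → T n = T ((n - 1) % N + 1))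
    {n : ℕ} (hn : 1 ≤ n) : ∃ i, 1 ≤ i ∧ i ≤ N ∧ T n = T i :=
  ⟨(n - 1) % N + 1, by omega, Nat.mod_lt _ hN, hcyc n hn⟩

lemma add_period_eq_of_cyclic (hcyc : ∀ n, 1 ≤ n → T n = T ((n - 1) % N + 1))
    {n : ℕ} (hn : 1 ≤ n) : T (n + N) = T n := by
  rw [hcyc (n + N) (by omega), hcyc n hn, show n + N - 1 = n - 1 + N by omega,
    Nat.add_mod_right]

end Cyclic

section Halpern

variable {X : Type*} [NormedAddCommGroup X]

lemma norm_sub_apply_le_of_nonexpansiveOn {C : Set X} {S : X → X} {u : X} {M : ℝ}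
    (hS : ∀ x ∈ C, ∀ y ∈ C, ‖S x - S y‖ ≤ ‖x - y‖) (hu : u ∈ C) (hSu : ‖u - S u‖ ≤ M)
    {y : X} (hy : y ∈ C) (hyu : ‖y - u‖ ≤ M) : ‖u - S y‖ ≤ 2 * M :=
  calc ‖u - S y‖ ≤ ‖u - S u‖ + ‖S u - S y‖ := norm_sub_le_norm_sub_add_norm_sub _ _ _
    _ ≤ M + ‖u - y‖ := add_le_add hSu (hS u hu y hy)
    _ ≤ 2 * M := by rw [norm_sub_rev] at hyu; linarith

variable [NormedSpace ℝ X]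

lemma halpern_mem {C : Set X} (hC : Convex ℝ C) {T : ℕ → X → X}
    (hT : ∀ n, 1 ≤ n → Set.MapsTo (T n) C C) {lam : ℕ → ℝ}
    (hlam : ∀ n, 1 ≤ n → lam n ∈ Set.Icc (0 : ℝ) 1) {u : X} (hu : u ∈ C) {x : ℕ → X}
    (hx0 : x 0 = u)
    (hx : ∀ n : ℕ, x (n + 1) = lam (n + 1) • u + (1 - lam (n + 1)) • T (n + 1) (x n))
    (n : ℕ) : x n ∈ C := by
  induction n with
  | zero => exact hx0 ▸ hu
  | succ k ih =>
    obtain ⟨h0, h1⟩ := hlam (k + 1) (by omega)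
    rw [hx k]
    exact hC hu (hT (k + 1) (by omega) ih) h0 (by linarith) (by ring)

lemma norm_halpern_step_sub_le {C : Set X} {S : X → X} {u : X} {M : ℝ}
    (hS : ∀ x ∈ C, ∀ y ∈ C, ‖S x - S y‖ ≤ ‖x - y‖) (hu : u ∈ C) (hSu : ‖u - S u‖ ≤ M)
    {x y : X} (hx : x ∈ C) (hy : y ∈ C) (hyu : ‖y - u‖ ≤ M) {μ ν : ℝ} (hμ : μ ≤ 1) :
    ‖(μ • u + (1 - μ) • S x) - (ν • u + (1 - ν) • S y)‖ ≤
      (1 - μ) * ‖x - y‖ + 2 * M * |ν - μ| := by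
  have hsplit : (μ • u + (1 - μ) • S x) - (ν • u + (1 - ν) • S y) =
      (1 - μ) • (S x - S y) + (μ - ν) • (u - S y) := by module
  have hμ' : 0 ≤ 1 - μ := by linarith
  calc ‖(μ • u + (1 - μ) • S x) - (ν • u + (1 - ν) • S y)‖
      ≤ ‖(1 - μ) • (S x - S y)‖ + ‖(μ - ν) • (u - S y)‖ := hsplit ▸ norm_add_le _ _
    _ = (1 - μ) * ‖S x - S y‖ + |ν - μ| * ‖u - S y‖ := by
      rw [norm_smul, norm_smul, Real.norm_of_nonneg hμ', Real.norm_eq_abs, abs_sub_comm]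
    _ ≤ (1 - μ) * ‖x - y‖ + |ν - μ| * (2 * M) := by
      gcongr
      exacts [hS x hx y hy, norm_sub_apply_le_of_nonexpansiveOn hS hu hSu hy hyu]
    _ = (1 - μ) * ‖x - y‖ + 2 * M * |ν - μ| := by ring

end Halpern

theorem stmt_10_general {X : Type*} [NormedAddCommGroup X] [NormedSpace ℝ X]
    (N : ℕ) (hN : 1 ≤ N) (C : Set X) (hC : Convex ℝ C)
    (T : ℕ → X → X)
    (hTmap : ∀ i, 1 ≤ i → i ≤ N → Set.MapsTo (T i) C C)
    (hTne : ∀ i, 1 ≤ i → i ≤ N → ∀ x ∈ C, ∀ y ∈ C, ‖T i x - T i y‖ ≤ ‖x - y‖)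
    (hcyc : ∀ n, 1 ≤ n → T n = T ((n - 1) % N + 1))
    (lam : ℕ → ℝ) (hlam : ∀ n, 1 ≤ n → lam n ∈ Set.Icc (0 : ℝ) 1)
    (u : X) (hu : u ∈ C) (x : ℕ → X) (hx0 : x 0 = u)
    (hx : ∀ n : ℕ, x (n + 1) = lam (n + 1) • u + (1 - lam (n + 1)) • T (n + 1) (x n))
    (M : ℝ)
    (hTu : ∀ i, 1 ≤ i → i ≤ N → ‖u - T i u‖ ≤ M)
    (hxb : ∀ n : ℕ, ‖x n - u‖ ≤ M) :
    ∀ n : ℕ, 1 ≤ n →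
      ‖x n - x (n + N)‖ ≤
        (1 - lam n) * ‖x (n - 1) - x (n + N - 1)‖ + 2 * M * |lam (n + N) - lam n| := by
  intro n hn
  have hmem := halpern_mem hC (fun m hm ↦ by
    obtain ⟨i, hi1, hiN, hi⟩ := exists_eq_of_cyclic hN hcyc hm
    exact hi ▸ hTmap i hi1 hiN) hlam hu hx0 hx
  obtain ⟨i, hi1, hiN, hTi⟩ := exists_eq_of_cyclic hN hcyc hn
  obtain ⟨k, rfl⟩ : ∃ k, n = k + 1 := ⟨n - 1, by omega⟩
  have hper := add_period_eq_of_cyclic hcyc hn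
  rw [add_right_comm] at hper ⊢
  rw [hx k, hx (k + N), Nat.add_sub_cancel, Nat.add_sub_cancel, hper, hTi]
  exact norm_halpern_step_sub_le (hTne i hi1 hiN) hu (hTu i hi1 hiN) (hmem k) (hmem (k + N))
    (hxb (k + N)) (hlam (k + 1) hn).2

/-- For the cyclic Halpern iteration,
`‖x n - x (n+N)‖ ≤ (1 - λ n)·‖x (n-1) - x (n+N-1)‖ + 2M·|λ (n+N) - λ n|`. -/
theorem stmt_10 {X : Type*} [NormedAddCommGroup X] [NormedSpace ℝ X]
    (N : ℕ) (hN : 1 ≤ N) (C : Set X) (hC : Convex ℝ C)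
    (T : ℕ → X → X)
    (hTmap : ∀ i, 1 ≤ i → i ≤ N → Set.MapsTo (T i) C C)
    (hTne : ∀ i, 1 ≤ i → i ≤ N → ∀ x ∈ C, ∀ y ∈ C, ‖T i x - T i y‖ ≤ ‖x - y‖)
    (hcyc : ∀ n, 1 ≤ n → T n = T ((n - 1) % N + 1))
    (lam : ℕ → ℝ) (hlam : ∀ n, 1 ≤ n → lam n ∈ Set.Icc (0 : ℝ) 1)
    (u : X) (hu : u ∈ C) (x : ℕ → X) (hx0 : x 0 = u)
    (hx : ∀ n : ℕ, x (n + 1) = lam (n + 1) • u + (1 - lam (n + 1)) • T (n + 1) (x n))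
    (M : ℝ) (hM : 0 < M)
    (hTu : ∀ i, 1 ≤ i → i ≤ N → ‖u - T i u‖ ≤ M)
    (hxb : ∀ n : ℕ, ‖x n - u‖ ≤ M) :
    ∀ n : ℕ, 1 ≤ n →
      ‖x n - x (n + N)‖ ≤
        (1 - lam n) * ‖x (n - 1) - x (n + N - 1)‖ + 2 * M * |lam (n + N) - lam n| :=
  stmt_10_general N hN C hC T hTmap hTne hcyc lam hlam u hu x hx0 hx M hTu hxb
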